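/- arXiv:2206.05357 — 2 statements merged into one kernel-verified Lean document; each statement's English description precedes it below -/
import Mathlib

section
/- Let $\eta' > 0$ and let $\lambda_k, \lambda_{k+1}, \delta_{k+1}$ be real numbers with $\lambda_{k+1} = \max\{-\eta'\delta_{k+1},\ \lambda_k + \eta'\delta_{k+1}\}$. Then $-\lambda_k \delta_{k+1} \leq \frac{\lambda_k^2 - \lambda_{k+1}^2}{2\eta'} + \eta'\delta_{k+1}^2$. -/
/-- One-step drift bound for the extra primal-dual dual update. -/
theorem dual_drift_bound (η' lamk lamk1 dk1 : ℝ) (hη' : 0 < η')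
    (hupd : lamk1 = max (-(η' * dk1)) (lamk + η' * dk1)) :
    -(lamk * dk1) ≤ (lamk ^ 2 - lamk1 ^ 2) / (2 * η') + η' * dk1 ^ 2 := by
  rw [div_add' _ _ _ (by positivity), le_div_iff₀ (by positivity)]
  rcases max_cases (-(η' * dk1)) (lamk + η' * dk1) with ⟨h1, h2⟩ | ⟨h1, h2⟩ <;>
    rw [hupd, h1] <;> nlinarith [sq_nonneg (lamk + η' * dk1), sq_nonneg (lamk - η' * dk1), mul_pos hη' hη', sq_nonneg dk1, sq_nonneg (η' * dk1)]
end

section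
/- Let $\beta > 0$ and let $\Psi(v, \lambda) = \|v\|_\infty + \|\lambda\|_1$ be a norm on $\mathbb{R}^m \times \mathbb{R}^m$. For any vectors $X_k, \tilde{X}_k, X_{k+1}, \tilde{X}_{k+1}$ and any map $G$ satisfying $\Psi^*(G(X) - G(X')) \leq \beta\Psi(X - X')$ (where $\Psi^*(v,\lambda) = \|v\|_1 + \|\lambda\|_\infty$ is the dual norm), we have $\langle G(\tilde{X}_{k+1}) - G(\tilde{X}_k), X_{k+1} - \tilde{X}_{k+1}\rangle \leq \frac{\beta}{\sqrt{8}-2}\Psi(\tilde{X}_{k+1} - X_k)^2 + \left(\frac{\beta}{\sqrt{8}+2} + \frac{\beta}{2}\right)\Psi(X_{k+1} - \tilde{X}_{k+1})^2 + \frac{\beta}{2}\Psi(X_k - \tilde{X}_k)^2$. -/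
open Finset

/-- The norm `Ψ(v, λ) = ‖v‖∞ + ‖λ‖₁` on `ℝ^m × ℝ^m`. -/
noncomputable def PsiNorm {m : ℕ} (X : (Fin m → ℝ) × (Fin m → ℝ)) : ℝ :=
  ‖X.1‖ + ∑ i, |X.2 i|

/-- The dual norm `Ψ*(v, λ) = ‖v‖₁ + ‖λ‖∞`. -/
noncomputable def PsiDualNorm {m : ℕ} (X : (Fin m → ℝ) × (Fin m → ℝ)) : ℝ :=
  (∑ i, |X.1 i|) + ‖X.2‖

/-- The standard inner product on `ℝ^m × ℝ^m`. -/
def pairInner {m : ℕ} (U W : (Fin m → ℝ) × (Fin m → ℝ)) : ℝ :=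
  (∑ i, U.1 i * W.1 i) + ∑ i, U.2 i * W.2 i

lemma PsiNorm_nonneg {m : ℕ} (X : (Fin m → ℝ) × (Fin m → ℝ)) : 0 ≤ PsiNorm X := by
  unfold PsiNorm
  have : (0:ℝ) ≤ ∑ i, |X.2 i| := Finset.sum_nonneg fun i _ => abs_nonneg _
  positivity

lemma PsiDualNorm_nonneg {m : ℕ} (X : (Fin m → ℝ) × (Fin m → ℝ)) : 0 ≤ PsiDualNorm X := by
  unfold PsiDualNorm
  have : (0:ℝ) ≤ ∑ i, |X.1 i| := Finset.sum_nonneg fun i _ => abs_nonneg _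
  positivity

lemma pairInner_le {m : ℕ} (U W : (Fin m → ℝ) × (Fin m → ℝ)) :
    pairInner U W ≤ PsiDualNorm U * PsiNorm W := by
  have h1 : ∑ i, U.1 i * W.1 i ≤ (∑ i, |U.1 i|) * ‖W.1‖ := by
    rw [Finset.sum_mul]
    refine Finset.sum_le_sum fun i _ => ?_
    calc U.1 i * W.1 i ≤ |U.1 i * W.1 i| := le_abs_self _
      _ = |U.1 i| * |W.1 i| := abs_mul _ _
      _ ≤ |U.1 i| * ‖W.1‖ := by
          exact mul_le_mul_of_nonneg_left (norm_le_pi_norm W.1 i) (abs_nonneg _)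
  have h2 : ∑ i, U.2 i * W.2 i ≤ ‖U.2‖ * ∑ i, |W.2 i| := by
    rw [Finset.mul_sum]
    refine Finset.sum_le_sum fun i _ => ?_
    calc U.2 i * W.2 i ≤ |U.2 i * W.2 i| := le_abs_self _
      _ = |U.2 i| * |W.2 i| := abs_mul _ _
      _ ≤ ‖U.2‖ * |W.2 i| := by
          exact mul_le_mul_of_nonneg_right (norm_le_pi_norm U.2 i) (abs_nonneg _)
  have ha1 : (0:ℝ) ≤ ∑ i, |U.1 i| := Finset.sum_nonneg fun i _ => abs_nonneg _
  have ha2 : (0:ℝ) ≤ ‖U.2‖ := norm_nonneg _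
  have hb1 : (0:ℝ) ≤ ‖W.1‖ := norm_nonneg _
  have hb2 : (0:ℝ) ≤ ∑ i, |W.2 i| := Finset.sum_nonneg fun i _ => abs_nonneg _
  unfold pairInner PsiDualNorm PsiNorm
  nlinarith [mul_nonneg ha1 hb2, mul_nonneg ha2 hb1]

lemma PsiDualNorm_triangle {m : ℕ} (A B : (Fin m → ℝ) × (Fin m → ℝ)) :
    PsiDualNorm (A + B) ≤ PsiDualNorm A + PsiDualNorm B := by
  unfold PsiDualNorm
  have h1 : ∑ i, |(A + B).1 i| ≤ (∑ i, |A.1 i|) + ∑ i, |B.1 i| := by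
    rw [← Finset.sum_add_distrib]
    exact Finset.sum_le_sum fun i _ => abs_add_le _ _
  have h2 : ‖(A + B).2‖ ≤ ‖A.2‖ + ‖B.2‖ := norm_add_le _ _
  linarith

/-- Key smoothness estimate in the optimistic mirror descent–ascent analysis. -/
theorem omda_smoothness_estimate {m : ℕ} (β : ℝ) (hβ : 0 < β)
    (G : (Fin m → ℝ) × (Fin m → ℝ) → (Fin m → ℝ) × (Fin m → ℝ))
    (hG : ∀ X X', PsiDualNorm (G X - G X') ≤ β * PsiNorm (X - X'))
    (Xk Xtk Xk1 Xtk1 : (Fin m → ℝ) × (Fin m → ℝ)) :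
    pairInner (G Xtk1 - G Xtk) (Xk1 - Xtk1) ≤
      β / (Real.sqrt 8 - 2) * PsiNorm (Xtk1 - Xk) ^ 2 +
      (β / (Real.sqrt 8 + 2) + β / 2) * PsiNorm (Xk1 - Xtk1) ^ 2 +
      β / 2 * PsiNorm (Xk - Xtk) ^ 2 := by
  set a := PsiNorm (Xtk1 - Xk) with ha
  set b := PsiNorm (Xk - Xtk) with hb
  set c := PsiNorm (Xk1 - Xtk1) with hc
  have ha0 : 0 ≤ a := PsiNorm_nonneg _
  have hb0 : 0 ≤ b := PsiNorm_nonneg _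
  have hc0 : 0 ≤ c := PsiNorm_nonneg _
  have hsplit : G Xtk1 - G Xtk = (G Xtk1 - G Xk) + (G Xk - G Xtk) := by abel
  have hdual : PsiDualNorm (G Xtk1 - G Xtk) ≤ β * (a + b) := by
    calc PsiDualNorm (G Xtk1 - G Xtk)
        ≤ PsiDualNorm (G Xtk1 - G Xk) + PsiDualNorm (G Xk - G Xtk) := by
          rw [hsplit]; exact PsiDualNorm_triangle _ _
      _ ≤ β * a + β * b := add_le_add (hG _ _) (hG _ _)
      _ = β * (a + b) := by ring
  have hinner : pairInner (G Xtk1 - G Xtk) (Xk1 - Xtk1) ≤ β * (a + b) * c := by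
    calc pairInner (G Xtk1 - G Xtk) (Xk1 - Xtk1)
        ≤ PsiDualNorm (G Xtk1 - G Xtk) * c := pairInner_le _ _
      _ ≤ β * (a + b) * c := mul_le_mul_of_nonneg_right hdual hc0
  refine hinner.trans ?_
  set s := Real.sqrt 8 with hs
  have hs2 : s ^ 2 = 8 := Real.sq_sqrt (by norm_num)
  have hsgt : 2 < s := by nlinarith [Real.sqrt_nonneg (8:ℝ)]
  have hsm : (0:ℝ) < s - 2 := by linarith
  have hsp : (0:ℝ) < s + 2 := by linarith
  have e1 : β / (s - 2) = β * (s + 2) / 4 := by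
    rw [div_eq_div_iff hsm.ne' (by norm_num)]
    nlinarith
  have e2 : β / (s + 2) = β * (s - 2) / 4 := by
    rw [div_eq_div_iff hsp.ne' (by norm_num)]
    nlinarith
  rw [e1, e2]
  have key : 4 * (a * c) ≤ (s + 2) * a ^ 2 + (s - 2) * c ^ 2 := by
    have hsq := sq_nonneg (2 * a - (s - 2) * c)
    have h2 : (s - 2) * (4 * (a * c)) ≤ (s - 2) * ((s + 2) * a ^ 2 + (s - 2) * c ^ 2) := by
      nlinarith
    exact le_of_mul_le_mul_left h2 hsm
  nlinarith [mul_le_mul_of_nonneg_left key hβ.le,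
    mul_nonneg hβ.le (sq_nonneg (b - c))]
end
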